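/- Let (m_n)_{n∈ℕ} be a sequence of positive reals and consider the BPVE with Poisson offspring distributions ρ_n(i) := e^{−m_n} m_n^i/i! for i ∈ ℕ (whose first moment is m_n). If ∑_{n=0}^∞ (∏_{j=0}^{n} m_j)^{−1} < ∞, then the BPVE survives, i.e. p_e < 1. -/

import Mathlib

/-!
For Poisson offspring `Φ_n(z) = exp (-m_n (1 - z))`, and `1 - e^{-u} ≥ u / (1 + u)` gives
`1 / (1 - Φ_n(z)) ≤ 1 / (m_n (1 - z)) + 1`. Iterating this along `H_{n+1} = H_n ∘ Φ_n` yields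
`1 / (1 - H_n(0)) ≤ ∑_{k ≤ n} (m_0 ⋯ m_{k-1})⁻¹`, which is bounded when the series converges,
so `H_n(0)` stays uniformly away from `1`.
-/

open Filter ENNReal

/-- Probability generating function `Φ_n(z) := ∑_i ρ_n(i) z^i` of the `n`-th offspring
distribution of a branching process in varying environment (BPVE). -/
noncomputable def Phi (ρ : ℕ → ℕ → ℝ) (n : ℕ) (z : ℝ) : ℝ :=
  ∑' i : ℕ, ρ n i * z ^ i

/-- The iterated generating functions `H_0(z) := z`, `H_{n+1} := H_n ∘ Φ_n`;
`H_n(0)` is the probability of extinction by generation `n`, and the extinction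
probability is `p_e = lim_n H_n(0)`. -/
noncomputable def Hseq (ρ : ℕ → ℕ → ℝ) : ℕ → ℝ → ℝ
  | 0 => fun z => z
  | n + 1 => fun z => Hseq ρ n (Phi ρ n z)

/-- First moment `m_n := ∑_i i ρ_n(i) ∈ [0,∞]` of the `n`-th offspring distribution. -/
noncomputable def mom (ρ : ℕ → ℕ → ℝ) (n : ℕ) : ℝ≥0∞ :=
  ∑' i : ℕ, (i : ℝ≥0∞) * ENNReal.ofReal (ρ n i)

/-- Second moment `m_n⁽²⁾ := ∑_i i² ρ_n(i) ∈ [0,∞]` of the `n`-th offspring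
distribution. -/
noncomputable def mom2 (ρ : ℕ → ℕ → ℝ) (n : ℕ) : ℝ≥0∞ :=
  ∑' i : ℕ, (i : ℝ≥0∞) ^ 2 * ENNReal.ofReal (ρ n i)

open Finset

lemma Real.inv_one_sub_exp_neg_le {u : ℝ} (hu : 0 < u) : (1 - Real.exp (-u))⁻¹ ≤ u⁻¹ + 1 := by
  have hexp : Real.exp (-u) ≤ (1 + u)⁻¹ := by
    rw [Real.exp_neg]
    exact inv_anti₀ (by linarith) (by linarith [Real.add_one_le_exp u])
  have hlower : u / (1 + u) ≤ 1 - Real.exp (-u) := by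
    have : 1 - (1 + u)⁻¹ = u / (1 + u) := by field_simp; ring
    linarith
  calc (1 - Real.exp (-u))⁻¹ ≤ (u / (1 + u))⁻¹ := inv_anti₀ (by positivity) hlower
    _ = u⁻¹ + 1 := by field_simp

section GeneralEnvironment

variable {ρ : ℕ → ℕ → ℝ} {m : ℕ → ℝ}

lemma Hseq_lt_one (hlt : ∀ n z, z < 1 → Phi ρ n z < 1) (n : ℕ) :
    ∀ z, z < 1 → Hseq ρ n z < 1 := by
  induction n with
  | zero => exact fun z hz => hz
  | succ n ih => exact fun z hz => ih _ (hlt n z hz)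

lemma inv_one_sub_Hseq_le (hm : ∀ n, 0 ≤ m n) (hlt : ∀ n z, z < 1 → Phi ρ n z < 1)
    (hinv : ∀ n z, z < 1 → (1 - Phi ρ n z)⁻¹ ≤ (m n * (1 - z))⁻¹ + 1) (n : ℕ) :
    ∀ z, z < 1 → (1 - Hseq ρ n z)⁻¹ ≤
      (∏ j ∈ range n, m j)⁻¹ * (1 - z)⁻¹ + ∑ k ∈ range n, (∏ j ∈ range k, m j)⁻¹ := by
  induction n with
  | zero => intro z _; simp [Hseq]
  | succ n ih =>
    intro z hz
    have hprod : 0 ≤ ∏ j ∈ range n, m j := prod_nonneg fun j _ => hm j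
    calc (1 - Hseq ρ n (Phi ρ n z))⁻¹
        ≤ (∏ j ∈ range n, m j)⁻¹ * (1 - Phi ρ n z)⁻¹ +
          ∑ k ∈ range n, (∏ j ∈ range k, m j)⁻¹ := ih _ (hlt n z hz)
      _ ≤ (∏ j ∈ range n, m j)⁻¹ * ((m n * (1 - z))⁻¹ + 1) +
          ∑ k ∈ range n, (∏ j ∈ range k, m j)⁻¹ := by gcongr; exact hinv n z hz
      _ = (∏ j ∈ range (n + 1), m j)⁻¹ * (1 - z)⁻¹ +
          ∑ k ∈ range (n + 1), (∏ j ∈ range k, m j)⁻¹ := by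
        rw [prod_range_succ, sum_range_succ, mul_inv, mul_inv]
        ring

lemma Hseq_zero_le (hm : ∀ n, 0 ≤ m n) (hlt : ∀ n z, z < 1 → Phi ρ n z < 1)
    (hinv : ∀ n z, z < 1 → (1 - Phi ρ n z)⁻¹ ≤ (m n * (1 - z))⁻¹ + 1)
    (hsum : Summable fun k => (∏ j ∈ range k, m j)⁻¹) (n : ℕ) :
    Hseq ρ n 0 ≤ 1 - (∑' k, (∏ j ∈ range k, m j)⁻¹)⁻¹ := by
  have hnonneg : ∀ k, 0 ≤ (∏ j ∈ range k, m j)⁻¹ :=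
    fun k => inv_nonneg.mpr (prod_nonneg fun j _ => hm j)
  have hpos : 0 < 1 - Hseq ρ n 0 := sub_pos.mpr (Hseq_lt_one hlt n 0 one_pos)
  have hbound : (1 - Hseq ρ n 0)⁻¹ ≤ ∑' k, (∏ j ∈ range k, m j)⁻¹ :=
    calc (1 - Hseq ρ n 0)⁻¹
        ≤ ∑ k ∈ range (n + 1), (∏ j ∈ range k, m j)⁻¹ := by
          have := inv_one_sub_Hseq_le hm hlt hinv n 0 one_pos
          rwa [sub_zero, inv_one, mul_one, add_comm, ← sum_range_succ] at this
      _ ≤ ∑' k, (∏ j ∈ range k, m j)⁻¹ := hsum.sum_le_tsum _ fun k _ => hnonneg k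
  have := inv_anti₀ (inv_pos.mpr hpos) hbound
  rw [inv_inv] at this
  linarith

theorem extinction_lt_one_of_summable (hm : ∀ n, 0 ≤ m n)
    (hlt : ∀ n z, z < 1 → Phi ρ n z < 1)
    (hinv : ∀ n z, z < 1 → (1 - Phi ρ n z)⁻¹ ≤ (m n * (1 - z))⁻¹ + 1)
    (hsum : Summable fun n => (∏ j ∈ range (n + 1), m j)⁻¹) {pe : ℝ}
    (hpe : Tendsto (fun n => Hseq ρ n 0) atTop (nhds pe)) :
    pe < 1 := by
  have hsum' : Summable fun k => (∏ j ∈ range k, m j)⁻¹ := (summable_nat_add_iff 1).mp hsum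
  have hone_le : 1 ≤ ∑' k, (∏ j ∈ range k, m j)⁻¹ := by
    simpa using hsum'.le_tsum 0 fun k _ => inv_nonneg.mpr (prod_nonneg fun j _ => hm j)
  have hle := le_of_tendsto hpe (Eventually.of_forall (Hseq_zero_le hm hlt hinv hsum'))
  have : 0 < (∑' k, (∏ j ∈ range k, m j)⁻¹)⁻¹ := inv_pos.mpr (by linarith)
  linarith

end GeneralEnvironment

noncomputable def poissonOffspring (m : ℕ → ℝ) (n i : ℕ) : ℝ :=
  Real.exp (-m n) * m n ^ i / (Nat.factorial i : ℝ)

lemma Phi_poissonOffspring (m : ℕ → ℝ) (n : ℕ) (z : ℝ) :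
    Phi (poissonOffspring m) n z = Real.exp (-(m n * (1 - z))) := by
  have hterm : ∀ i : ℕ, poissonOffspring m n i * z ^ i
      = Real.exp (-m n) * ((m n * z) ^ i / (Nat.factorial i : ℝ)) := by
    intro i; rw [poissonOffspring, mul_pow]; ring
  have hexp : ∑' i : ℕ, (m n * z) ^ i / (Nat.factorial i : ℝ) = Real.exp (m n * z) := by
    rw [Real.exp_eq_exp_ℝ, NormedSpace.exp_eq_tsum_div]
  rw [Phi, tsum_congr hterm, tsum_mul_left, hexp, ← Real.exp_add]
  ring_nf

/-- the BPVE with Poisson offspring distributions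
`ρ_n(i) = e^{−m_n} m_n^i / i!` (first moment `m_n`) survives whenever
`∑_n (∏_{j=0}^n m_j)⁻¹ < ∞`. -/
theorem poisson_bpve_survival (m : ℕ → ℝ) (hm : ∀ n, 0 < m n)
    (hsum : Summable fun n => (∏ j ∈ Finset.range (n + 1), m j)⁻¹)
    (pe : ℝ)
    (hpe : Tendsto
      (fun n => Hseq (fun n i => Real.exp (-m n) * m n ^ i / (Nat.factorial i : ℝ)) n 0)
      atTop (nhds pe)) :
    pe < 1 := by
  have hu : ∀ n z, z < 1 → 0 < m n * (1 - z) := fun n z hz => mul_pos (hm n) (by linarith)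
  refine extinction_lt_one_of_summable (ρ := poissonOffspring m) (fun n => (hm n).le)
    (fun n z hz => ?_) (fun n z hz => ?_) hsum hpe
  · rw [Phi_poissonOffspring, Real.exp_lt_one_iff, neg_lt_zero]
    exact hu n z hz
  · rw [Phi_poissonOffspring]
    exact Real.inv_one_sub_exp_neg_le (hu n z hz)
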